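/- Let K be a field, S = K[x_1,…,x_n], and let I ⊆ S be a complete intersection monomial ideal minimally generated by m monomials (a regular sequence of monomials, equivalently monomials with pairwise disjoint supports). Then sdepth(I) ≥ 1 + n − m. -/

import Mathlib

open MvPolynomial

/-- The Stanley space `u K[Z]`: the `K`-span of all monomials `x^(u+τ)` with
`supp τ ⊆ Z`. -/
noncomputable def StanleySpace (K : Type*) [Field K] {n : ℕ} (u : Fin n →₀ ℕ) (Z : Finset (Fin n)) :
    Submodule K (MvPolynomial (Fin n) K) :=
  Submodule.span K {p | ∃ τ : Fin n →₀ ℕ, (τ.support : Set (Fin n)) ⊆ Z ∧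
    p = monomial (u + τ) (1 : K)}

/-- A Stanley decomposition of a monomial ideal `I`: a finite family of Stanley spaces
`u_i K[Z_i]` with `u_i` a monomial of `I`, whose internal direct sum is `I`
(as a `K`-vector space). -/
structure StanleyDecomposition (K : Type*) [Field K] {n : ℕ}
    (I : Ideal (MvPolynomial (Fin n) K)) where
  r : ℕ
  rpos : 0 < r
  u : Fin r → (Fin n →₀ ℕ)
  Z : Fin r → Finset (Fin n)
  mem : ∀ i, monomial (u i) (1 : K) ∈ I
  isSup : Submodule.restrictScalars K I = ⨆ i, StanleySpace K (u i) (Z i)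
  indep : iSupIndep fun i => StanleySpace K (u i) (Z i)

/-- `sdepth 𝒟 = min_i |Z_i|`. -/
def StanleyDecomposition.sdepth {K : Type*} [Field K] {n : ℕ}
    {I : Ideal (MvPolynomial (Fin n) K)} (D : StanleyDecomposition K I) : ℕ :=
  Finset.univ.inf' ⟨⟨0, D.rpos⟩, Finset.mem_univ _⟩ fun i => (D.Z i).card

/-- The Stanley depth of a monomial ideal: the maximum of `sdepth 𝒟` over all
Stanley decompositions `𝒟` of `I`. -/
noncomputable def Ideal.sdepth (K : Type*) [Field K] {n : ℕ}
    (I : Ideal (MvPolynomial (Fin n) K)) : ℕ :=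
  sSup (Set.range fun D : StanleyDecomposition K I => D.sdepth)

/-!
Order the generators `v₀, …, v_{m-1}` and the variables. Every exponent `a` of the ideal lies in
exactly one piece, determined by the least `i` with `v_i ≤ a` and, for each `j < i`, the least
variable `t_j` with `a t_j < v_j t_j` together with the value `a t_j`. Because the supports of the
`v_j` are pairwise disjoint, that piece is a Stanley cone `u K[Z]` whose only fixed variables are
`t_0, …, t_{i-1}`, so `|Z| ≥ n - i ≥ n + 1 - m`.
-/

open Finset Function

section Cones

variable {σ : Type*}

def stanleyCone (u : σ →₀ ℕ) (Z : Finset σ) : Set (σ →₀ ℕ) :=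
  {a | u ≤ a ∧ ∀ s ∉ Z, a s = u s}

lemma self_mem_stanleyCone (u : σ →₀ ℕ) (Z : Finset σ) : u ∈ stanleyCone u Z :=
  ⟨le_rfl, fun _ _ => rfl⟩

lemma stanleyCone_eq_image_add (u : σ →₀ ℕ) (Z : Finset σ) :
    stanleyCone u Z = (u + ·) '' {τ | ↑τ.support ⊆ (Z : Set σ)} := by
  ext a
  constructor
  · rintro ⟨hle, hfix⟩
    refine ⟨a - u, fun s hs => ?_, add_tsub_cancel_of_le hle⟩
    by_contra hsZ
    simp [hfix s hsZ] at hs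
  · rintro ⟨τ, hτ, rfl⟩
    refine ⟨le_self_add, fun s hs => ?_⟩
    have : τ s = 0 := Finsupp.notMem_support_iff.1 fun h => hs (hτ h)
    simp [this]

end Cones

section RestrictSupport

variable {σ R : Type*} [CommSemiring R]

lemma restrictSupport_iUnion {ι : Sort*} (A : ι → Set (σ →₀ ℕ)) :
    restrictSupport R (⋃ i, A i) = ⨆ i, restrictSupport R (A i) := by
  simp only [restrictSupport_eq_span, Set.image_iUnion, Submodule.span_iUnion]

lemma disjoint_restrictSupport {A B : Set (σ →₀ ℕ)} (h : Disjoint A B) :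
    Disjoint (restrictSupport R A) (restrictSupport R B) := by
  rw [Submodule.disjoint_def]
  intro p hA hB
  rw [mem_restrictSupport_iff] at hA hB
  rw [← support_eq_empty, ← Finset.coe_eq_empty]
  exact Set.subset_empty_iff.1 ((Set.subset_inter hA hB).trans h.inter_eq.subset)

lemma iSupIndep_restrictSupport {ι : Type*} {A : ι → Set (σ →₀ ℕ)}
    (h : Pairwise (Disjoint on A)) : iSupIndep fun i => restrictSupport R (A i) := by
  intro i
  simp only [← restrictSupport_iUnion]
  exact disjoint_restrictSupport <| Set.disjoint_iUnion_right.2 fun j =>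
    Set.disjoint_iUnion_right.2 fun hj => h (Ne.symm hj)

lemma restrictScalars_span_monomial {ι : Type*} (v : ι → σ →₀ ℕ) :
    (Ideal.span (Set.range fun i => monomial (v i) (1 : R))).restrictScalars R =
      restrictSupport R {a | ∃ i, v i ≤ a} := by
  ext p
  rw [Submodule.restrictScalars_mem, mem_restrictSupport_iff,
    Set.range_comp' (monomial · (1 : R)) v, mem_ideal_span_monomial_image]
  simp [Set.subset_def]

end RestrictSupport

section StanleyDepth

variable {K : Type*} [Field K] {n : ℕ} {I : Ideal (MvPolynomial (Fin n) K)}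

lemma stanleySpace_eq_restrictSupport (u : Fin n →₀ ℕ) (Z : Finset (Fin n)) :
    StanleySpace K u Z = restrictSupport K (stanleyCone u Z) := by
  rw [restrictSupport_eq_span, stanleyCone_eq_image_add, Set.image_image, StanleySpace]
  congr 1
  ext p
  simp [eq_comm]

lemma StanleyDecomposition.sdepth_le (D : StanleyDecomposition K I) : D.sdepth ≤ n :=
  (Finset.inf'_le _ (Finset.mem_univ ⟨0, D.rpos⟩)).trans
    ((Finset.card_le_univ _).trans (Fintype.card_fin n).le)

lemma StanleyDecomposition.sdepth_le_sdepth (D : StanleyDecomposition K I) :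
    D.sdepth ≤ I.sdepth K :=
  le_csSup ⟨n, by rintro _ ⟨D', rfl⟩; exact D'.sdepth_le⟩ ⟨D, rfl⟩

theorem le_sdepth_of_iUnion_stanleyCone {ι : Type*} [Fintype ι] [Nonempty ι]
    {A : Set (Fin n →₀ ℕ)} (hI : I.restrictScalars K = restrictSupport K A)
    (u : ι → Fin n →₀ ℕ) (Z : ι → Finset (Fin n))
    (hcover : ⋃ x, stanleyCone (u x) (Z x) = A)
    (hdisj : Pairwise (Disjoint on fun x => stanleyCone (u x) (Z x)))
    {d : ℕ} (hd : ∀ x, d ≤ #(Z x)) : d ≤ I.sdepth K := by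
  let e := (Fintype.equivFin ι).symm
  have hmem (x : ι) : monomial (u x) (1 : K) ∈ I.restrictScalars K := by
    rw [hI, ← hcover, monomial_mem_restrictSupport]
    exact Or.inl (Set.mem_iUnion.2 ⟨x, self_mem_stanleyCone _ _⟩)
  let D : StanleyDecomposition K I :=
    { r := Fintype.card ι
      rpos := Fintype.card_pos
      u := u ∘ e
      Z := Z ∘ e
      mem := fun k => hmem (e k)
      isSup := by
        simp only [hI, ← hcover, restrictSupport_iUnion, comp_apply,
          stanleySpace_eq_restrictSupport]
        exact (e.iSup_comp (g := fun x => restrictSupport K (stanleyCone (u x) (Z x)))).symm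
      indep := by
        simp only [comp_apply, stanleySpace_eq_restrictSupport]
        exact (iSupIndep_restrictSupport hdisj).comp e.injective }
  exact (Finset.le_inf' _ _ fun k _ => hd (e k)).trans D.sdepth_le_sdepth

end StanleyDepth

section FirstDeficit

variable {σ : Type*} {v a : σ →₀ ℕ} {w w' : Σ t : σ, Fin (v t)}

lemma fst_mem_support_of_fin (w : Σ t : σ, Fin (v t)) : w.1 ∈ v.support :=
  Finsupp.mem_support_iff.2 w.2.pos.ne'

variable [LinearOrder σ]

def IsFirstDeficit (v a : σ →₀ ℕ) (w : Σ t : σ, Fin (v t)) : Prop :=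
  a w.1 = w.2 ∧ ∀ s < w.1, v s ≤ a s

lemma IsFirstDeficit.apply_lt (h : IsFirstDeficit v a w) : a w.1 < v w.1 :=
  h.1 ▸ w.2.isLt

lemma IsFirstDeficit.not_le (h : IsFirstDeficit v a w) : ¬v ≤ a :=
  fun hle => h.apply_lt.not_ge (hle _)

lemma IsFirstDeficit.fst_le (h : IsFirstDeficit v a w) (h' : IsFirstDeficit v a w') :
    w.1 ≤ w'.1 :=
  not_lt.1 fun hlt => h'.apply_lt.not_ge (h.2 _ hlt)

lemma IsFirstDeficit.unique (h : IsFirstDeficit v a w) (h' : IsFirstDeficit v a w') : w = w' := by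
  obtain ⟨t, c⟩ := w
  obtain ⟨t', c'⟩ := w'
  obtain rfl : t = t' := le_antisymm (h.fst_le h') (h'.fst_le h)
  obtain rfl : c = c' := Fin.ext (h.1.symm.trans h'.1)
  rfl

lemma exists_isFirstDeficit [WellFoundedLT σ] (h : ¬v ≤ a) : ∃ w, IsFirstDeficit v a w := by
  obtain ⟨t, ht, hmin⟩ := wellFounded_lt.has_min {s | a s < v s}
    (by simpa [Finsupp.le_def, Set.Nonempty] using h)
  exact ⟨⟨t, ⟨a t, ht⟩⟩, rfl, fun s hs => not_lt.1 fun hlt => hmin s hlt hs⟩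

/-- The least exponent whose first deficit against `v` is `w`. -/
noncomputable def floorOfDeficit (v : σ →₀ ℕ) (w : Σ t : σ, Fin (v t)) : σ →₀ ℕ :=
  v.filter (· < w.1) ⊔ Finsupp.single w.1 w.2

lemma floorOfDeficit_le_iff :
    floorOfDeficit v w ≤ a ↔ (∀ s < w.1, v s ≤ a s) ∧ (w.2 : ℕ) ≤ a w.1 := by
  rw [floorOfDeficit, sup_le_iff, Finsupp.single_le_iff, Finsupp.le_def]
  simp only [Finsupp.filter_apply]
  refine and_congr_left' (forall_congr' fun s => ?_)
  split_ifs with hs <;> simp [hs]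

lemma floorOfDeficit_apply_fst : floorOfDeficit v w w.1 = w.2 := by
  simp [floorOfDeficit, Finsupp.sup_apply]

lemma floorOfDeficit_apply_of_notMem {s : σ} (hs : s ∉ v.support) :
    floorOfDeficit v w s = 0 := by
  have hne : w.1 ≠ s := fun h => hs (h ▸ fst_mem_support_of_fin w)
  simp [floorOfDeficit, Finsupp.sup_apply, hne, Finsupp.filter_apply,
    Finsupp.notMem_support_iff.1 hs]

end FirstDeficit

lemma Finsupp.finset_sup_apply {σ ι : Type*} (s : Finset ι) (g : ι → σ →₀ ℕ) (t : σ) :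
    s.sup g t = s.sup fun k => g k t :=
  Finset.apply_sup_eq_sup_comp (fun f : σ →₀ ℕ => f t) (fun _ _ => rfl) rfl

/-- `⟨i, f⟩` records the least `i` with `v i ≤ a` and, for each `j < i`, the first deficit of `a`
against `v j`. -/
abbrev LexPiece {ι σ : Type*} [LT ι] (v : ι → σ →₀ ℕ) : Type _ :=
  Σ i : ι, ∀ j : {j // j < i}, Σ t : σ, Fin (v j t)

namespace LexPiece

variable {ι σ : Type*} [LinearOrder ι] {v : ι → σ →₀ ℕ}

section Vars

variable [Fintype ι] [Fintype σ] [DecidableEq σ]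

def vars (x : LexPiece v) : Finset σ :=
  (univ.image fun j => (x.2 j).1)ᶜ

lemma card_sub_le_card_vars (x : LexPiece v) :
    Fintype.card σ - Fintype.card {j // j < x.1} ≤ #x.vars := by
  rw [vars, card_compl]
  exact Nat.sub_le_sub_left (card_image_le.trans card_univ.le) _

end Vars

variable [LinearOrder σ]

def carrier (x : LexPiece v) : Set (σ →₀ ℕ) :=
  {a | v x.1 ≤ a ∧ ∀ j : {j // j < x.1}, IsFirstDeficit (v j) a (x.2 j)}

lemma fst_le_of_mem_carrier {x y : LexPiece v} {a : σ →₀ ℕ} (hx : a ∈ x.carrier)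
    (hy : a ∈ y.carrier) : x.1 ≤ y.1 :=
  not_lt.1 fun hlt => (hx.2 ⟨y.1, hlt⟩).not_le hy.1

lemma eq_of_mem_carrier {x y : LexPiece v} {a : σ →₀ ℕ} (hx : a ∈ x.carrier)
    (hy : a ∈ y.carrier) : x = y := by
  obtain ⟨i, f⟩ := x
  obtain ⟨i', f'⟩ := y
  obtain rfl : i = i' := le_antisymm (fst_le_of_mem_carrier hx hy) (fst_le_of_mem_carrier hy hx)
  obtain rfl : f = f' := _root_.funext fun j => (hx.2 j).unique (hy.2 j)
  rfl

lemma pairwise_disjoint_carrier (v : ι → σ →₀ ℕ) : Pairwise (Disjoint on carrier (v := v)) :=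
  fun _ _ hxy => Set.disjoint_left.2 fun _ hx hy => hxy (eq_of_mem_carrier hx hy)

lemma iUnion_carrier [WellFoundedLT ι] [WellFoundedLT σ] (v : ι → σ →₀ ℕ) :
    ⋃ x : LexPiece v, x.carrier = {a | ∃ i, v i ≤ a} := by
  ext a
  simp only [Set.mem_iUnion, Set.mem_ofPred_eq]
  refine ⟨fun ⟨x, hx⟩ => ⟨x.1, hx.1⟩, fun h => ?_⟩
  obtain ⟨i, hi, hmin⟩ := wellFounded_lt.has_min {i | v i ≤ a} h
  choose f hf using fun j : {j // j < i} => exists_isFirstDeficit fun hj => hmin j hj j.2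
  exact ⟨⟨i, f⟩, hi, hf⟩

variable [Fintype ι]

noncomputable def gen (x : LexPiece v) : σ →₀ ℕ :=
  v x.1 ⊔ univ.sup fun j : {j // j < x.1} => floorOfDeficit (v j) (x.2 j)

lemma gen_le_iff {x : LexPiece v} {a : σ →₀ ℕ} :
    x.gen ≤ a ↔ v x.1 ≤ a ∧ ∀ j : {j // j < x.1}, floorOfDeficit (v j) (x.2 j) ≤ a := by
  simp [gen, Finset.sup_le_iff]

lemma gen_apply_fst (hv : Pairwise (Disjoint on fun i => (v i).support)) (x : LexPiece v)
    (j : {j // j < x.1}) : x.gen (x.2 j).1 = (x.2 j).2 := by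
  have hj := fst_mem_support_of_fin (x.2 j)
  refine le_antisymm ?_ (floorOfDeficit_apply_fst.symm.le.trans ((gen_le_iff.1 le_rfl).2 j _))
  rw [gen, Finsupp.sup_apply, Finsupp.finset_sup_apply, sup_le_iff, Finset.sup_le_iff]
  refine ⟨?_, fun k _ => ?_⟩
  · have : v x.1 (x.2 j).1 = 0 := Finsupp.notMem_support_iff.1 (disjoint_left.1 (hv j.2.ne) hj)
    simp [this]
  · obtain rfl | hkj := eq_or_ne k j
    · exact floorOfDeficit_apply_fst.le
    · have := disjoint_left.1 (hv fun h => hkj (Subtype.ext h).symm) hj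
      simp [floorOfDeficit_apply_of_notMem this]

lemma carrier_eq_stanleyCone [Fintype σ] [DecidableEq σ]
    (hv : Pairwise (Disjoint on fun i => (v i).support)) (x : LexPiece v) :
    x.carrier = stanleyCone x.gen x.vars := by
  ext a
  have hfix : (∀ s ∉ x.vars, a s = x.gen s) ↔ ∀ j, a (x.2 j).1 = (x.2 j).2 := by
    simp only [vars, mem_compl, mem_image, mem_univ, true_and, not_not, forall_exists_index,
      forall_apply_eq_imp_iff, gen_apply_fst hv]
  simp only [carrier, stanleyCone, Set.mem_ofPred_eq, gen_le_iff, hfix, IsFirstDeficit,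
    floorOfDeficit_le_iff]
  constructor
  · rintro ⟨hle, hd⟩
    exact ⟨⟨hle, fun j => ⟨(hd j).2, (hd j).1.ge⟩⟩, fun j => (hd j).1⟩
  · rintro ⟨⟨hle, hd⟩, hfix⟩
    exact ⟨hle, fun j => ⟨hfix j, (hd j).1⟩⟩

end LexPiece

lemma Fin.card_subtype_lt {m : ℕ} (i : Fin m) : Fintype.card {j : Fin m // j < i} = i := by
  rw [Fintype.card_subtype, filter_gt_eq_Iio, Fin.card_Iio]

theorem sdepth_ci_lower_bound_general (n : ℕ) (K : Type*) [Field K]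
    (m : ℕ) (hm : 0 < m) (v : Fin m → (Fin n →₀ ℕ))
    (hdisj : ∀ i j, i ≠ j → Disjoint (v i).support (v j).support) :
    1 + n - m ≤
      Ideal.sdepth K (Ideal.span (Set.range fun i => monomial (v i) (1 : K))) := by
  have : Nonempty (LexPiece v) := ⟨⟨⟨0, hm⟩, fun j => (Nat.not_lt_zero _ j.2).elim⟩⟩
  have hcone (x : LexPiece v) : stanleyCone x.gen x.vars = x.carrier :=
    (x.carrier_eq_stanleyCone fun i j => hdisj i j).symm
  refine le_sdepth_of_iUnion_stanleyCone (restrictScalars_span_monomial v) (LexPiece.gen (v := v))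
    LexPiece.vars ?_ ?_ fun x => ?_
  · simpa only [hcone] using LexPiece.iUnion_carrier v
  · simpa only [hcone] using LexPiece.pairwise_disjoint_carrier v
  · have := x.card_sub_le_card_vars
    rw [Fintype.card_fin, Fin.card_subtype_lt] at this
    omega

/-- If `I ⊆ K[x₁,…,xₙ]` is a complete intersection monomial ideal minimally generated
by `m` monomials (nonconstant monomials with pairwise disjoint supports), then
`sdepth I ≥ 1 + n - m`. -/
theorem sdepth_ci_lower_bound (n : ℕ) (K : Type*) [Field K]
    (m : ℕ) (hm : 0 < m) (v : Fin m → (Fin n →₀ ℕ)) (hv : ∀ i, v i ≠ 0)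
    (hdisj : ∀ i j, i ≠ j → Disjoint (v i).support (v j).support) :
    1 + n - m ≤
      Ideal.sdepth K (Ideal.span (Set.range fun i => monomial (v i) (1 : K))) :=
  sdepth_ci_lower_bound_general n K m hm v hdisj
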